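/- Suppose A = diag(a₁,…,aₙ) is a real diagonal matrix and β > 0. A point z ∈ ℂⁿ with ‖z‖₂ = 1 is a stationary point of f(z) = (1/2) z* A z + (β/2) Σₖ |zₖ|⁴ on the unit sphere if and only if, setting I = {k : z_k ≠ 0}, every k ∈ I satisfies |z_k|² = 1/|I| + (1/(2β)) ( (1/|I|) Σ_{i∈I} a_i − a_k ), and these quantities lie in (0,1]. -/
import Mathlib


open Matrix Finset

theorem stmt3 {n : ℕ} (a : Fin n → ℝ) (β : ℝ) (hβ : 0 < β)
    (z : Fin n → ℂ) (hz : ∑ k, ‖z k‖ ^ 2 = 1)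
    (lam : ℝ)
    (hlam : lam = (1 / 2) * ∑ k, a k * ‖z k‖ ^ 2 + β * ∑ k, ‖z k‖ ^ 4)
    (I : Finset (Fin n)) (hI : I = Finset.univ.filter (fun k => z k ≠ 0)) :
    (∀ k, (a k : ℂ) * z k + ((2 * β * ‖z k‖ ^ 2 : ℝ) : ℂ) * z k
        = ((2 * lam : ℝ) : ℂ) * z k)
    ↔ (∀ k ∈ I,
        ‖z k‖ ^ 2 = 1 / (I.card : ℝ)
          + (1 / (2 * β)) * ((1 / (I.card : ℝ)) * ∑ i ∈ I, a i - a k) ∧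
        0 < 1 / (I.card : ℝ)
          + (1 / (2 * β)) * ((1 / (I.card : ℝ)) * ∑ i ∈ I, a i - a k) ∧
        1 / (I.card : ℝ)
          + (1 / (2 * β)) * ((1 / (I.card : ℝ)) * ∑ i ∈ I, a i - a k) ≤ 1) := by
  have hmem : ∀ j, j ∈ I ↔ z j ≠ 0 := by
    intro j; rw [hI]; simp
  have hsum : ∑ k ∈ I, ‖z k‖ ^ 2 = 1 := by
    rw [← hz, hI]
    apply Finset.sum_filter_of_ne
    intro k _ h
    intro hk
    rw [hk] at h; simp at h
  have hne : I.Nonempty := by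
    rw [Finset.nonempty_iff_ne_empty]
    intro h
    rw [h] at hsum; simp at hsum
  set N : ℝ := (I.card : ℝ) with hN
  set S : ℝ := ∑ i ∈ I, a i with hS
  have hNpos : 0 < N := by
    have := Finset.card_pos.mpr hne
    rw [hN]
    exact_mod_cast this
  have hNne : N ≠ 0 := ne_of_gt hNpos
  have hβne : β ≠ 0 := ne_of_gt hβ
  have hlamI : 2 * lam = ∑ k ∈ I, (a k * ‖z k‖ ^ 2 + 2 * β * ‖z k‖ ^ 4) := by
    have h1 : ∑ k, a k * ‖z k‖ ^ 2 = ∑ k ∈ I, a k * ‖z k‖ ^ 2 := by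
      rw [hI]
      symm
      apply Finset.sum_filter_of_ne
      intro k _ h hk
      rw [hk] at h; simp at h
    have h2 : ∑ k, ‖z k‖ ^ 4 = ∑ k ∈ I, ‖z k‖ ^ 4 := by
      rw [hI]
      symm
      apply Finset.sum_filter_of_ne
      intro k _ h hk
      rw [hk] at h; simp at h
    rw [hlam, h1, h2, Finset.sum_add_distrib, ← Finset.mul_sum]
    ring
  constructor
  · intro hstat
    have hk' : ∀ j ∈ I, a j + 2 * β * ‖z j‖ ^ 2 = 2 * lam := by
      intro j hj
      have hzj : z j ≠ 0 := (hmem j).mp hj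
      have h0 : ((a j + 2 * β * ‖z j‖ ^ 2 - 2 * lam : ℝ) : ℂ) * z j = 0 := by
        have hsj := hstat j
        push_cast at hsj
        push_cast
        linear_combination hsj
      rcases mul_eq_zero.mp h0 with h | h
      · have : (a j + 2 * β * ‖z j‖ ^ 2 - 2 * lam : ℝ) = 0 := by exact_mod_cast h
        linarith
      · exact absurd h hzj
    have key : 2 * β = N * (2 * lam) - S := by
      have c1 : 2 * β = ∑ j ∈ I, (2 * β * ‖z j‖ ^ 2) := by
        rw [← Finset.mul_sum, hsum]; ring
      have c2 : ∑ j ∈ I, (2 * β * ‖z j‖ ^ 2) = ∑ j ∈ I, (2 * lam - a j) := by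
        apply Finset.sum_congr rfl
        intro j hj
        linarith [hk' j hj]
      rw [c1, c2, Finset.sum_sub_distrib, Finset.sum_const, nsmul_eq_mul, hS]
    intro k hk
    have hzk : z k ≠ 0 := (hmem k).mp hk
    have heq : ‖z k‖ ^ 2 = 1 / N + 1 / (2 * β) * (1 / N * S - a k) := by
      have h2 : 2 * β * ‖z k‖ ^ 2 = 2 * lam - a k := by linarith [hk' k hk]
      field_simp
      linear_combination N * h2 - key
    refine ⟨heq, ?_, ?_⟩
    · rw [← heq]
      have : 0 < ‖z k‖ := norm_pos_iff.mpr hzk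
      positivity
    · rw [← heq, ← hsum]
      apply Finset.single_le_sum (f := fun j => ‖z j‖ ^ 2) _ hk
      intro i _
      positivity
  · intro h k
    by_cases hzk : z k = 0
    · simp [hzk]
    · have hkI : k ∈ I := (hmem k).mpr hzk
      have hterm : ∀ j ∈ I, a j * ‖z j‖ ^ 2 + 2 * β * ‖z j‖ ^ 4
          = (2 * β + S) / N * ‖z j‖ ^ 2 := by
        intro j hj
        have hj2 := (h j hj).1
        have h' : 2 * β * ‖z j‖ ^ 2 = (2 * β + S) / N - a j := by
          rw [hj2]; field_simp; ring
        linear_combination ‖z j‖ ^ 2 * h'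
      have hlam2 : 2 * lam = (2 * β + S) / N := by
        rw [hlamI, Finset.sum_congr rfl hterm, ← Finset.mul_sum, hsum, mul_one]
      have hs : a k + 2 * β * ‖z k‖ ^ 2 = 2 * lam := by
        have hk2 := (h k hkI).1
        rw [hk2, hlam2]
        field_simp
        ring
      have hc : ((a k + 2 * β * ‖z k‖ ^ 2 : ℝ) : ℂ) * z k
          = ((2 * lam : ℝ) : ℂ) * z k := by
        rw [hs]
      push_cast at hc ⊢
      linear_combination hc
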